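/- arXiv:1704.02847 — 2 statements merged into one kernel-verified Lean document; each statement's English description precedes it below -/
import Mathlib

section
/- The model M with W = ℤ ∪ {r}, w ≼ v iff w = r or w = v, S(r) = r, S(n) = n+1 for n ∈ ℤ, is a persistent model: S is both forward confluent and backward confluent with respect to ≼. -/
/-- The order on `ℤ ∪ {r}` (with `none` playing the role of `r`):
    `x ≼ y` iff `x = r` or `x = y`. -/
def leZ : Option ℤ → Option ℤ → Prop := fun x y => x = none ∨ x = y

def SZ : Option ℤ → Option ℤ
  | none => none
  | some n => some (n + 1)

/-! Backward confluence comes from two facts about `S`: it is surjective, and only `r` is sent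
to `r`. If `S a = b` take `u = a`; otherwise `S a = r` forces `a = r`, and any preimage `u` of
`b` lies above `r`. -/

theorem leZ_refl (x : Option ℤ) : leZ x x := Or.inr rfl

theorem leZ_none (x : Option ℤ) : leZ none x := Or.inl rfl

theorem leZ_trans {a b c : Option ℤ} : leZ a b → leZ b c → leZ a c := by
  rintro (rfl | rfl) hbc
  · exact leZ_none c
  · exact hbc

theorem leZ_antisymm {a b : Option ℤ} : leZ a b → leZ b a → a = b := by
  rintro (rfl | rfl) hba
  · rcases hba with h | h <;> exact h.symm
  · rfl

theorem SZ_eq_none_iff {a : Option ℤ} : SZ a = none ↔ a = none := by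
  cases a <;> simp [SZ]

theorem SZ_surjective : Function.Surjective SZ
  | none => ⟨none, rfl⟩
  | some m => ⟨some (m - 1), by simp [SZ]⟩

theorem leZ_SZ_SZ {a b : Option ℤ} : leZ a b → leZ (SZ a) (SZ b) := by
  rintro (rfl | rfl)
  · exact leZ_none _
  · exact leZ_refl _

theorem exists_leZ_and_SZ_eq {a b : Option ℤ} (h : leZ (SZ a) b) : ∃ u, leZ a u ∧ SZ u = b := by
  rcases h with h | h
  · obtain ⟨u, rfl⟩ := SZ_surjective b
    exact ⟨u, Or.inl (SZ_eq_none_iff.mp h), rfl⟩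
  · exact ⟨a, leZ_refl a, h⟩

/-- `leZ` is a partial order and `SZ` is both forward and backward confluent,
    i.e. the model on `ℤ ∪ {r}` is persistent. -/
theorem leZ_SZ_persistent :
    (∀ x, leZ x x) ∧
    (∀ a b c, leZ a b → leZ b c → leZ a c) ∧
    (∀ a b, leZ a b → leZ b a → a = b) ∧
    (∀ a b, leZ a b → leZ (SZ a) (SZ b)) ∧
    (∀ a b, leZ (SZ a) b → ∃ u, leZ a u ∧ SZ u = b) :=
  ⟨leZ_refl, fun _ _ _ => leZ_trans, fun _ _ => leZ_antisymm, fun _ _ => leZ_SZ_SZ,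
    fun _ _ => exists_leZ_and_SZ_eq⟩
end

section
/- The logic ITL^p (validity over persistent models) does not have the finite model property: there is a formula, namely ¬¬◇□p → ◇¬¬□p, that is valid on all finite persistent models but not valid on all persistent models. -/
inductive Fml (P : Type) : Type
  | var (p : P)
  | bot
  | and (φ ψ : Fml P)
  | or (φ ψ : Fml P)
  | impl (φ ψ : Fml P)
  | next (φ : Fml P)
  | dia (φ : Fml P)
  | box (φ : Fml P)

def Fml.neg {P : Type} (φ : Fml P) : Fml P := Fml.impl φ Fml.bot

/-- Intuitionistic temporal satisfaction over an explicit order `le`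
    and successor function `S`. -/
def sat {P W : Type} (le : W → W → Prop) (S : W → W) (V : W → P → Prop) :
    Fml P → W → Prop
  | .var p, w => V w p
  | .bot, _ => False
  | .and φ ψ, w => sat le S V φ w ∧ sat le S V ψ w
  | .or φ ψ, w => sat le S V φ w ∨ sat le S V ψ w
  | .impl φ ψ, w => ∀ v, le w v → sat le S V φ v → sat le S V ψ v
  | .next φ, w => sat le S V φ (S w)
  | .dia φ, w => ∃ k : ℕ, sat le S V φ (S^[k] w)
  | .box φ, w => ∀ k : ℕ, sat le S V φ (S^[k] w)

/-- Validity over all persistent models. -/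
def persistentValid (φ : Fml Unit) : Prop :=
  ∀ (W : Type) (le : W → W → Prop) (S : W → W) (V : W → Unit → Prop),
    (∀ w, le w w) → (∀ a b c, le a b → le b c → le a c) →
    (∀ a b, le a b → le b a → a = b) →
    (∀ a b, le a b → ∀ q, V a q → V b q) →
    (∀ a b, le a b → le (S a) (S b)) →
    (∀ a b, le (S a) b → ∃ u, le a u ∧ S u = b) →
    ∀ w, sat le S V φ w

/-- Validity over all finite persistent models. -/
def finitePersistentValid (φ : Fml Unit) : Prop :=
  ∀ (W : Type) (le : W → W → Prop) (S : W → W) (V : W → Unit → Prop), Finite W →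
    (∀ w, le w w) → (∀ a b c, le a b → le b c → le a c) →
    (∀ a b, le a b → le b a → a = b) →
    (∀ a b, le a b → ∀ q, V a q → V b q) →
    (∀ a b, le a b → le (S a) (S b)) →
    (∀ a b, le (S a) b → ∃ u, le a u ∧ S u = b) →
    ∀ w, sat le S V φ w

/-!
On a finite model, `¬¬◇□p` at `v` gives, for each `x ≽ v`, a world `u x ≽ x` from which `p` holds
forever after a delay `delay x`, and finiteness bounds all delays by one `N`. Backward confluence
writes every world above `S^N v` as `S^N x` with `x ≽ v`, and forward confluence puts `S^N (u x)`
above it, so `¬¬□p` holds at `S^N v`.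

The infinite countermodel has worlds `(label, time)`, compared only at equal times, with `S`
advancing time. Labels are a root `⊥` and, for each `k`, a pair `⟨k, false⟩ < ⟨k, true⟩`, where `p`
holds at `⟨k, true⟩` after time `k`. Every world sees some `⟨k, true⟩`, so `¬¬◇□p` holds at the
root; but at time `k` the world `⟨k, false⟩` sees no world where `p` holds, so `¬¬□p` fails at
`(⊥, k)` for every `k`: the delays are unbounded.
-/

section Frames
variable {P W : Type} {le : W → W → Prop} {S : W → W} {V : W → P → Prop}

theorem sat_neg_neg_iff {φ : Fml P} {w : W} :
    sat le S V φ.neg.neg w ↔ ∀ v, le w v → ∃ u, le v u ∧ sat le S V φ u := by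
  simp [Fml.neg, sat]

theorem sat_box_iterate {φ : Fml P} {w : W} (h : sat le S V φ.box w) (n : ℕ) :
    sat le S V φ.box (S^[n] w) := fun k => by
  simpa only [← Function.iterate_add_apply] using h (k + n)

theorem rel_iterate_of_forward_confluent (hfwd : ∀ a b, le a b → le (S a) (S b)) (n : ℕ)
    {a b : W} (h : le a b) : le (S^[n] a) (S^[n] b) := by
  induction n generalizing a b with
  | zero => exact h
  | succ n ih => simpa only [Function.iterate_succ_apply] using ih (hfwd a b h)

theorem exists_rel_iterate_eq_of_backward_confluent
    (hbwd : ∀ a b, le (S a) b → ∃ u, le a u ∧ S u = b) (n : ℕ) {a b : W}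
    (h : le (S^[n] a) b) : ∃ u, le a u ∧ S^[n] u = b := by
  induction n generalizing a b with
  | zero => exact ⟨b, h, rfl⟩
  | succ n ih =>
    rw [Function.iterate_succ_apply'] at h
    obtain ⟨c, hc, rfl⟩ := hbwd _ _ h
    obtain ⟨u, hu, rfl⟩ := ih hc
    exact ⟨u, hu, Function.iterate_succ_apply' S n u⟩

theorem sat_impl_neg_neg_dia_box_of_finite [Finite W]
    (hfwd : ∀ a b, le a b → le (S a) (S b))
    (hbwd : ∀ a b, le (S a) b → ∃ u, le a u ∧ S u = b) (φ : Fml P) (w : W) :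
    sat le S V (.impl φ.box.dia.neg.neg φ.box.neg.neg.dia) w := by
  intro v _ hv
  rw [sat_neg_neg_iff] at hv
  choose! u hxu delay hbox using hv
  obtain ⟨N, hN⟩ := (Set.finite_range delay).bddAbove
  refine ⟨N, sat_neg_neg_iff.2 fun b hb => ?_⟩
  obtain ⟨x, hx, rfl⟩ := exists_rel_iterate_eq_of_backward_confluent hbwd N hb
  refine ⟨S^[N] (u x), rel_iterate_of_forward_confluent hfwd N (hxu x hx), ?_⟩
  have hdelay : N - delay x + delay x = N := Nat.sub_add_cancel (hN (Set.mem_range_self x))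
  simpa only [← Function.iterate_add_apply, hdelay] using sat_box_iterate (hbox x hx) (N - delay x)

end Frames

theorem finitePersistentValid_impl_neg_neg_dia_box :
    finitePersistentValid (.impl (Fml.var ()).box.dia.neg.neg (Fml.var ()).box.neg.neg.dia) := by
  intro W le S V _ _ _ _ _ hfwd hbwd w
  exact sat_impl_neg_neg_dia_box_of_finite hfwd hbwd _ w

abbrev Label : Type := WithBot (Σ _ : ℕ, Bool)

namespace Label

theorem exists_le_coe_true (x : Label) : ∃ k, x ≤ ↑(⟨k, true⟩ : Σ _ : ℕ, Bool) := by
  induction x using WithBot.recBotCoe with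
  | bot => exact ⟨0, bot_le⟩
  | coe x => exact ⟨x.1, WithBot.coe_le_coe.2 (Sigma.mk_le_mk_iff.2 le_top)⟩

theorem eq_of_coe_true_le {k : ℕ} {y : Label} (h : ↑(⟨k, true⟩ : Σ _ : ℕ, Bool) ≤ y) :
    y = ↑(⟨k, true⟩ : Σ _ : ℕ, Bool) := by
  induction y using WithBot.recBotCoe with
  | bot => exact (WithBot.not_coe_le_bot _ h).elim
  | coe y =>
    rcases WithBot.coe_le_coe.1 h with ⟨_, _, _, hb⟩
    rw [top_le_iff.1 hb]
    rfl

theorem index_eq_of_coe_le_coe {i j : ℕ} {a b : Bool}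
    (h : (↑(⟨i, a⟩ : Σ _ : ℕ, Bool) : Label) ≤ ↑(⟨j, b⟩ : Σ _ : ℕ, Bool)) : i = j :=
  (Sigma.le_def.1 (WithBot.coe_le_coe.1 h)).1

end Label

def sameTimeLe {L : Type} [LE L] (a b : L × ℕ) : Prop := a.1 ≤ b.1 ∧ a.2 = b.2

def tick {L : Type} (a : L × ℕ) : L × ℕ := (a.1, a.2 + 1)

theorem tick_iterate {L : Type} (n : ℕ) (a : L × ℕ) : tick^[n] a = (a.1, a.2 + n) := by
  induction n with
  | zero => rfl
  | succ n ih => rw [Function.iterate_succ_apply', ih]; rfl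

def countermodelVal (a : Label × ℕ) (_ : Unit) : Prop :=
  ∃ k, a.1 = ↑(⟨k, true⟩ : Σ _ : ℕ, Bool) ∧ k < a.2

theorem countermodelVal_mono (a b : Label × ℕ) (hab : sameTimeLe a b) (q : Unit) :
    countermodelVal a q → countermodelVal b q := by
  rintro ⟨k, hk, hkt⟩
  exact ⟨k, Label.eq_of_coe_true_le (hk ▸ hab.1), hab.2 ▸ hkt⟩

theorem sat_neg_neg_dia_box_countermodel (a : Label × ℕ) :
    sat sameTimeLe tick countermodelVal (Fml.var ()).box.dia.neg.neg a := by
  rw [sat_neg_neg_iff]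
  rintro ⟨x, t⟩ -
  obtain ⟨k, hk⟩ := Label.exists_le_coe_true x
  refine ⟨(↑(⟨k, true⟩ : Σ _ : ℕ, Bool), t), ⟨hk, rfl⟩, k + 1, fun j => ?_⟩
  simp only [sat, tick_iterate]
  exact ⟨k, rfl, by omega⟩

theorem not_sat_dia_neg_neg_box_countermodel_bot (t : ℕ) :
    ¬ sat sameTimeLe tick countermodelVal (Fml.var ()).box.neg.neg.dia (⊥, t) := by
  rintro ⟨k, hk⟩
  rw [sat_neg_neg_iff, tick_iterate] at hk
  obtain ⟨u, hu, hbox⟩ := hk (↑(⟨t + k, false⟩ : Σ _ : ℕ, Bool), t + k) ⟨bot_le, rfl⟩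
  obtain ⟨m, hm, hmu⟩ := hbox 0
  have hmk : t + k = m := Label.index_eq_of_coe_le_coe (hm ▸ hu.1)
  have hut : t + k = u.2 := hu.2
  simp only [Function.iterate_zero_apply] at hmu
  omega

theorem not_persistentValid_impl_neg_neg_dia_box :
    ¬ persistentValid (.impl (Fml.var ()).box.dia.neg.neg (Fml.var ()).box.neg.neg.dia) := by
  intro hvalid
  have hroot := hvalid (Label × ℕ) sameTimeLe tick countermodelVal
    (fun _ => ⟨le_rfl, rfl⟩)
    (fun _ _ _ hab hbc => ⟨hab.1.trans hbc.1, hab.2.trans hbc.2⟩)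
    (fun _ _ hab hba => Prod.ext (le_antisymm hab.1 hba.1) hab.2)
    countermodelVal_mono
    (fun _ _ hab => ⟨hab.1, congrArg (· + 1) hab.2⟩)
    (fun a b hab => ⟨(b.1, a.2), ⟨hab.1, rfl⟩, Prod.ext rfl hab.2⟩)
    (⊥, 0)
  exact not_sat_dia_neg_neg_box_countermodel_bot 0
    (hroot _ ⟨le_rfl, rfl⟩ (sat_neg_neg_dia_box_countermodel _))

/-- `ITL^p` lacks the finite model property: `¬¬◇□p → ◇¬¬□p` is valid on all
    finite persistent models but not on all persistent models. -/
theorem itlp_no_fmp :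
    finitePersistentValid
      (Fml.impl (Fml.neg (Fml.neg (Fml.dia (Fml.box (Fml.var ())))))
                (Fml.dia (Fml.neg (Fml.neg (Fml.box (Fml.var ())))))) ∧
    ¬ persistentValid
      (Fml.impl (Fml.neg (Fml.neg (Fml.dia (Fml.box (Fml.var ())))))
                (Fml.dia (Fml.neg (Fml.neg (Fml.box (Fml.var ())))))) := by
  exact ⟨finitePersistentValid_impl_neg_neg_dia_box, not_persistentValid_impl_neg_neg_dia_box⟩
end
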